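/- arXiv:1701.07867 — 4 statements merged into one kernel-verified Lean document; each statement's English description precedes it below -/
import Mathlib

section
/- Let k ≥ 1 be an integer and ρ > 0, and let f be holomorphic on the disk Δ_ρ with a zero of order exactly k−1 at 0. Then there exist ρ′ > 0 and an injective holomorphic map φ : Δ_{ρ′} → Δ_ρ with φ(0) = 0 such that f(φ(z))·φ′(z) = k·z^{k−1} for all z ∈ Δ_{ρ′}. (That is, the meromorphic differential f dz is brought to the standard form d(z^k) by the standard coordinate φ.) -/
open Metric Set Filter Complex FormalMultilinearSeries
open scoped ENNReal NNReal Topology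


/-- Analytic local inverse in 1-D. -/
lemma analytic_local_inverse (ψ : ℂ → ℂ) (hψ : AnalyticAt ℂ ψ 0) (hψ0 : ψ 0 = 0)
    (hd : deriv ψ 0 ≠ 0) :
    ∃ φ : ℂ → ℂ, AnalyticAt ℂ φ 0 ∧ φ 0 = 0 ∧ (∀ᶠ z in nhds 0, ψ (φ z) = z) := by
  have hs : HasStrictDerivAt ψ (deriv ψ 0) 0 :=
    (hψ.contDiffAt (n := 2)).hasStrictDerivAt (by norm_num)
  have hF : HasStrictFDerivAt ψ
      (↑(ContinuousLinearEquiv.unitsEquivAut ℂ (Units.mk0 _ hd)) : ℂ →L[ℂ] ℂ) 0 :=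
    hs.hasStrictFDerivAt_equiv hd
  set Φ := hF.toOpenPartialHomeomorph ψ with hΦ
  have hcoe : (Φ : ℂ → ℂ) = ψ := hF.toOpenPartialHomeomorph_coe
  have hsource : (0 : ℂ) ∈ Φ.source := hF.mem_toOpenPartialHomeomorph_source
  have htarget : (0 : ℂ) ∈ Φ.target := by
    have := hF.image_mem_toOpenPartialHomeomorph_target
    rwa [hψ0] at this
  refine ⟨Φ.symm, ?_, ?_, ?_⟩
  · have hsymm0 : Φ.symm 0 = 0 := by
      have := Φ.left_inv hsource
      rwa [hcoe, hψ0] at this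
    refine Φ.analyticAt_symm (i := ContinuousLinearEquiv.unitsEquivAut ℂ (Units.mk0 _ hd)) htarget ?_ ?_
    · rw [hsymm0, hcoe]; exact hψ
    · rw [hsymm0, hcoe]
      exact hF.hasFDerivAt.fderiv
  · have := Φ.left_inv hsource
    rwa [hcoe, hψ0] at this
  · have := Φ.eventually_right_inverse' hsource
    rw [hcoe, hψ0] at this
    filter_upwards [this] with z hz using hz

open Metric Set Filter Complex

/-- k-th root of a non-vanishing analytic function. -/
lemma analytic_kth_root (k : ℕ) (hk : 1 ≤ k) (H : ℂ → ℂ) (hH : AnalyticAt ℂ H 0)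
    (h0 : H 0 ≠ 0) :
    ∃ u : ℂ → ℂ, AnalyticAt ℂ u 0 ∧ u 0 ≠ 0 ∧ ∀ᶠ z in nhds 0, u z ^ k = H z := by
  have hkC : (k : ℂ) ≠ 0 := Nat.cast_ne_zero.mpr (by omega)
  set u : ℂ → ℂ := fun z =>
    Complex.exp (Complex.log (H 0) / k) * Complex.exp (Complex.log (H z * (H 0)⁻¹) / k) with hu
  have hq : AnalyticAt ℂ (fun z => H z * (H 0)⁻¹) 0 := hH.mul analyticAt_const
  have hq0 : H 0 * (H 0)⁻¹ = 1 := mul_inv_cancel₀ h0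
  refine ⟨u, ?_, ?_, ?_⟩
  · apply analyticAt_const.mul
    apply AnalyticAt.cexp
    apply AnalyticAt.div _ analyticAt_const hkC
    exact (analyticAt_clog (by rw [hq0]; exact one_mem_slitPlane)).comp hq
  · simp only [hu]
    exact mul_ne_zero (Complex.exp_ne_zero _) (Complex.exp_ne_zero _)
  · have hc : ContinuousAt H 0 := hH.continuousAt
    have hne : ∀ᶠ z in nhds (0:ℂ), H z ≠ 0 := hc.eventually_ne h0
    filter_upwards [hne] with z hz
    have h1 : H z * (H 0)⁻¹ ≠ 0 := mul_ne_zero hz (inv_ne_zero h0)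
    simp only [hu, mul_pow, ← Complex.exp_nat_mul]
    rw [mul_div_cancel₀ _ hkC, mul_div_cancel₀ _ hkC,
      Complex.exp_log h0, Complex.exp_log h1]
    field_simp
lemma exists_psi (k : ℕ) (hk : 1 ≤ k) (g : ℂ → ℂ) (hg : AnalyticAt ℂ g 0) (hg0 : g 0 ≠ 0) :
    ∃ ψ : ℂ → ℂ, AnalyticAt ℂ ψ 0 ∧ ψ 0 = 0 ∧ deriv ψ 0 ≠ 0 ∧
      ∀ᶠ z in nhds (0:ℂ), z ^ (k-1) * g z = deriv (fun w => ψ w ^ k) z := by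
  obtain ⟨p, r, hp⟩ := hg
  have hr : 0 < min r 1 := lt_min hp.r_pos (by norm_num)
  obtain ⟨s, hs0, hslt⟩ := ENNReal.lt_iff_exists_nnreal_btwn.mp hr
  have hs_pos : 0 < s := by exact_mod_cast hs0
  have hsr : (s : ℝ≥0∞) < r := hslt.trans_le (min_le_left _ _)
  have hs1 : (s : ℝ) < 1 := by
    have := hslt.trans_le (min_le_right _ _)
    exact_mod_cast this
  have hsR : (0:ℝ) < s := hs_pos
  set a : ℕ → ℂ := fun n => p.coeff n with ha
  set c : ℕ → ℂ := fun n => (((n + k : ℕ) : ℂ))⁻¹ * a n with hc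
  have hnk : ∀ n : ℕ, (((n + k : ℕ) : ℂ)) ≠ 0 := fun n => Nat.cast_ne_zero.mpr (by omega)
  have husum : Summable (fun n => ‖p n‖ * (s:ℝ)^n) :=
    p.summable_norm_mul_pow (hsr.trans_le hp.r_le)
  have hcn : ∀ n, ‖c n‖ ≤ ‖p n‖ := by
    intro n
    rw [hc]
    simp only [norm_mul, norm_inv, Complex.norm_natCast, p.norm_apply_eq_norm_coef]
    calc (↑(n+k) : ℝ)⁻¹ * ‖a n‖ ≤ 1 * ‖a n‖ := by
          apply mul_le_mul_of_nonneg_right _ (norm_nonneg _)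
          rw [inv_le_one_iff₀]
          right
          exact_mod_cast Nat.one_le_iff_ne_zero.mpr (by omega)
      _ = ‖a n‖ := one_mul _
  set q := FormalMultilinearSeries.ofScalars ℂ c with hq
  have hqs : Summable (fun n => ‖q n‖ * (s:ℝ)^n) := by
    apply husum.of_nonneg_of_le (fun n => by positivity)
    intro n
    rw [hq, ofScalars_norm]
    exact mul_le_mul_of_nonneg_right (hcn n) (by positivity)
  have hqrad : (s : ℝ≥0∞) ≤ q.radius := q.le_radius_of_summable_norm hqs
  have hq_pos : 0 < q.radius := lt_of_lt_of_le (by exact_mod_cast hs0) hqrad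
  set H := q.sum with hHdef
  have hH : AnalyticAt ℂ H 0 := (q.hasFPowerSeriesOnBall hq_pos).analyticAt
  have hHz : ∀ z, H z = ∑' n, c n * z^n := by
    intro z
    refine tsum_congr fun n => ?_
    rw [hq, ofScalars_apply_eq, smul_eq_mul, mul_comm]
  have hH0 : H 0 = ((k:ℂ))⁻¹ * g 0 := by
    rw [hHz, tsum_eq_single 0 (fun n hn => by simp [zero_pow hn])]
    have h00 : p.coeff 0 = g 0 := by
      have := hp.coeff_zero (fun _ => 0)
      simpa using this
    simp [hc, ha, h00]
  have hH0ne : H 0 ≠ 0 := by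
    rw [hH0]
    exact mul_ne_zero (inv_ne_zero (Nat.cast_ne_zero.mpr (by omega))) hg0
  obtain ⟨u, hu_an, hu0, huk⟩ := analytic_kth_root k hk H hH hH0ne
  set ψ : ℂ → ℂ := fun z => z * u z with hψdef
  have hψan : AnalyticAt ℂ ψ 0 := (analyticAt_id).mul hu_an
  have hψ0 : ψ 0 = 0 := by simp [hψdef]
  have hψd : deriv ψ 0 = u 0 := by
    have h1 : HasDerivAt ψ (1 * u 0 + 0 * deriv u 0) 0 :=
      (hasDerivAt_id 0).mul hu_an.differentiableAt.hasDerivAt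
    simpa using h1.deriv
  set F : ℂ → ℂ := fun z => ∑' n, c n * z^(n+k) with hFdef
  have claim1 : ∀ z, F z = z^k * H z := by
    intro z
    rw [hHz, ← tsum_mul_left]
    refine tsum_congr fun n => ?_
    rw [pow_add]; ring
  have claim2 : ∀ y ∈ ball (0:ℂ) (s:ℝ), HasDerivAt F (y^(k-1) * g y) y := by
    intro y hy
    have hds := hasDerivAt_tsum_of_isPreconnected husum isOpen_ball
      (convex_ball (0:ℂ) (s:ℝ)).isPreconnected
      (g := fun n z => c n * z^(n+k)) (g' := fun n y => a n * y^(n+k-1))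
      (fun n z hz => by
        have h1 := (hasDerivAt_pow (n+k) z).const_mul (c n)
        have h2 : c n * (((n+k:ℕ):ℂ) * z^(n+k-1)) = a n * z^(n+k-1) := by
          rw [hc]
          calc (((n+k:ℕ):ℂ))⁻¹ * a n * (((n+k:ℕ):ℂ) * z^(n+k-1))
              = (((n+k:ℕ):ℂ) * (((n+k:ℕ):ℂ))⁻¹) * (a n * z^(n+k-1)) := by ring
            _ = a n * z^(n+k-1) := by rw [mul_inv_cancel₀ (hnk n), one_mul]
        rwa [h2] at h1)
      (fun n z hz => by
        rw [norm_mul, norm_pow, p.norm_apply_eq_norm_coef]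
        have hz' : ‖z‖ < (s:ℝ) := mem_ball_zero_iff.mp hz
        have h3 : ‖z‖^(n+k-1) ≤ (s:ℝ)^(n+k-1) :=
          pow_le_pow_left₀ (norm_nonneg _) hz'.le _
        have h4 : (s:ℝ)^(n+k-1) ≤ (s:ℝ)^n :=
          pow_le_pow_of_le_one hsR.le hs1.le (by omega)
        exact mul_le_mul_of_nonneg_left (h3.trans h4) (norm_nonneg _))
      (mem_ball_self hsR)
      (by
        apply summable_zero.congr
        intro n
        simp [zero_pow (show n + k ≠ 0 by omega)])
      hy
    have hsum_eq : (∑' n, a n * y^(n+k-1)) = y^(k-1) * g y := by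
      have hyr : y ∈ Metric.eball (0:ℂ) r := by
        rw [Metric.mem_eball, edist_zero_right]
        calc (‖y‖₊ : ℝ≥0∞) < (s : ℝ≥0∞) := by
              exact_mod_cast mem_ball_zero_iff.mp hy
          _ < r := hsr
      have hgs : HasSum (fun n => y^n • a n) (g y) := by
        have := hp.hasSum (y := y) (by simpa using hyr)
        simp only [apply_eq_pow_smul_coeff, zero_add] at this
        exact this
      have h5 : (∑' n, y^n * a n) = g y := by
        simpa [smul_eq_mul] using hgs.tsum_eq
      calc (∑' n, a n * y^(n+k-1)) = ∑' n, y^(k-1) * (y^n * a n) := by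
            refine tsum_congr fun n => ?_
            have : n + k - 1 = (k-1) + n := by omega
            rw [this, pow_add]; ring
        _ = y^(k-1) * ∑' n, y^n * a n := tsum_mul_left
        _ = y^(k-1) * g y := by rw [h5]
    rwa [hsum_eq] at hds
  have claim3 : (fun z => ψ z ^ k) =ᶠ[nhds (0:ℂ)] F := by
    filter_upwards [huk] with z hz
    rw [hψdef]
    simp only [mul_pow, hz, ← claim1 z]
  refine ⟨ψ, hψan, hψ0, by rw [hψd]; exact hu0, ?_⟩
  have h2 : ∀ᶠ z in nhds (0:ℂ), deriv F z = z^(k-1) * g z := by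
    filter_upwards [ball_mem_nhds (0:ℂ) hsR] with z hz
    exact (claim2 z hz).deriv
  filter_upwards [claim3.deriv, h2] with z hz1 hz2
  rw [← hz2, ← hz1]

/-- `f` has a zero of order exactly `m` at `0`: `f z = z ^ m * g z` near `0`,
with `g` holomorphic near `0` and `g 0 ≠ 0`. -/
def HasZeroOfExactOrderAtZero (f : ℂ → ℂ) (m : ℕ) : Prop :=
  ∃ g : ℂ → ℂ, AnalyticAt ℂ g 0 ∧ g 0 ≠ 0 ∧ ∀ᶠ z in nhds (0 : ℂ), f z = z ^ m * g z

/-- Existence of a standard coordinate at a zero: if `f` is holomorphic on `Δ_ρ` with a zero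
of order exactly `k - 1` at `0`, there are `ρ' > 0` and an injective holomorphic
`φ : Δ_ρ' → Δ_ρ` with `φ 0 = 0` bringing the differential `f dz` to the standard form
`d(z^k) = k z^(k-1) dz`. -/
theorem standard_coordinate_at_zero (k : ℕ) (hk : 1 ≤ k) (ρ : ℝ) (hρ : 0 < ρ)
    (f : ℂ → ℂ) (hf : AnalyticOnNhd ℂ f (ball (0 : ℂ) ρ))
    (h0 : HasZeroOfExactOrderAtZero f (k - 1)) :
    ∃ ρ' > (0 : ℝ), ∃ φ : ℂ → ℂ,
      AnalyticOnNhd ℂ φ (ball (0 : ℂ) ρ') ∧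
      InjOn φ (ball (0 : ℂ) ρ') ∧
      MapsTo φ (ball (0 : ℂ) ρ') (ball (0 : ℂ) ρ) ∧
      φ 0 = 0 ∧
      ∀ z ∈ ball (0 : ℂ) ρ', f (φ z) * deriv φ z = (k : ℂ) * z ^ (k - 1) := by
  obtain ⟨g, hg_an, hg0, hfg⟩ := h0
  obtain ⟨ψ, hψan, hψ0, hψd, hE1⟩ := exists_psi k hk g hg_an hg0
  obtain ⟨φ, hφan, hφ0, hR⟩ := analytic_local_inverse ψ hψan hψ0 hψd
  have hφc : ContinuousAt φ 0 := hφan.continuousAt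
  have hφ0' : Filter.Tendsto φ (nhds 0) (nhds 0) := by
    have := hφc.tendsto
    rwa [hφ0] at this
  have hφ_ev_an : ∀ᶠ z in nhds (0:ℂ), AnalyticAt ℂ φ z := hφan.eventually_analyticAt
  have hψ_ev_an : ∀ᶠ w in nhds (0:ℂ), AnalyticAt ℂ ψ w := hψan.eventually_analyticAt
  have hE : ∀ᶠ w in nhds (0:ℂ), f w = (k:ℂ) * ψ w ^ (k-1) * deriv ψ w := by
    have hder : ∀ᶠ w in nhds (0:ℂ),
        deriv (fun x => ψ x ^ k) w = (k:ℂ) * ψ w ^ (k-1) * deriv ψ w := by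
      filter_upwards [hψ_ev_an] with w hw
      exact ((hw.differentiableAt.hasDerivAt).pow k).deriv
    filter_upwards [hfg, hE1, hder] with w h1 h2 h3
    rw [h1, h2, h3]
  have hmem : ∀ᶠ w in nhds (0:ℂ), w ∈ ball (0:ℂ) ρ := ball_mem_nhds 0 hρ
  have hcomp : ∀ᶠ z in nhds (0:ℂ),
      AnalyticAt ℂ ψ (φ z) ∧ f (φ z) = (k:ℂ) * ψ (φ z) ^ (k-1) * deriv ψ (φ z)
        ∧ φ z ∈ ball (0:ℂ) ρ :=
    hφ0'.eventually (hψ_ev_an.and (hE.and hmem))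
  have hL' : ∀ᶠ z in nhds (0:ℂ), ∀ᶠ w in nhds z, ψ (φ w) = w := hR.eventually_nhds
  have hfinal : ∀ᶠ z in nhds (0:ℂ),
      AnalyticAt ℂ φ z ∧ ψ (φ z) = z ∧ φ z ∈ ball (0:ℂ) ρ ∧
        f (φ z) * deriv φ z = (k:ℂ) * z ^ (k-1) := by
    filter_upwards [hφ_ev_an, hR, hcomp, hL'] with z hφz hRz hcz hLz
    obtain ⟨hψφ, hfφ, hmz⟩ := hcz
    refine ⟨hφz, hRz, hmz, ?_⟩
    have hdφ : HasDerivAt φ (deriv φ z) z := hφz.differentiableAt.hasDerivAt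
    have hdψ : HasDerivAt ψ (deriv ψ (φ z)) (φ z) := hψφ.differentiableAt.hasDerivAt
    have hdc : HasDerivAt (fun w => ψ (φ w)) (deriv ψ (φ z) * deriv φ z) z := hdψ.comp z hdφ
    have hid : HasDerivAt (fun w : ℂ => w) (deriv ψ (φ z) * deriv φ z) z :=
      hdc.congr_of_eventuallyEq (by filter_upwards [hLz] with w hw using hw.symm)
    have hone : deriv ψ (φ z) * deriv φ z = 1 := hid.unique (hasDerivAt_id z)
    calc f (φ z) * deriv φ z
        = (k:ℂ) * ψ (φ z) ^ (k-1) * (deriv ψ (φ z) * deriv φ z) := by rw [hfφ]; ring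
      _ = (k:ℂ) * z ^ (k-1) := by rw [hRz, hone, mul_one]
  rw [Metric.eventually_nhds_iff_ball] at hfinal
  obtain ⟨ε, hε, hball⟩ := hfinal
  refine ⟨ε, hε, φ, fun z hz => (hball z hz).1, ?_, fun z hz => (hball z hz).2.2.1, hφ0,
    fun z hz => (hball z hz).2.2.2⟩
  intro x hx y hy hxy
  rw [← (hball x hx).2.1, hxy, (hball y hy).2.1]
end

section
/- The standard coordinate at a zero is unique up to multiplication by a k-th root of unity: let k ≥ 1, ρ > 0, and let f be holomorphic on Δ_ρ with a zero of order exactly k−1 at 0. If φ₁ and φ₂ are injective holomorphic maps on a disk Δ_{ρ′} into Δ_ρ with φ₁(0) = φ₂(0) = 0 and f(φ_i(z))·φ_i′(z) = k·z^{k−1} on Δ_{ρ′} for i = 1, 2, then there exist ρ″ > 0 and ζ ∈ ℂ with ζ^k = 1 such that φ₂(z) = φ₁(ζ·z) for all z ∈ Δ_{ρ″}. -/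
open Metric Set Filter

/-- A standard coordinate for `f dz` at a zero of order `k - 1`: an injective holomorphic map
`φ : Δ_ρ' → Δ_ρ` with `φ 0 = 0` such that `f (φ z) * φ' z = k * z^(k-1)` on `Δ_ρ'`. -/
def IsStandardCoordAtZero (k : ℕ) (ρ ρ' : ℝ) (f φ : ℂ → ℂ) : Prop :=
  AnalyticOnNhd ℂ φ (ball (0 : ℂ) ρ') ∧
  InjOn φ (ball (0 : ℂ) ρ') ∧
  MapsTo φ (ball (0 : ℂ) ρ') (ball (0 : ℂ) ρ) ∧
  φ 0 = 0 ∧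
  ∀ z ∈ ball (0 : ℂ) ρ', f (φ z) * deriv φ z = (k : ℂ) * z ^ (k - 1)

/-!
Since `f` vanishes to order exactly `k - 1`, the identity `f (φ₁ z) φ₁' z = k z^(k-1)` at `z → 0`
forces `φ₁' 0 ^ k · g 0 = k`, so `φ₁` is locally invertible and `ψ := φ₁⁻¹ ∘ φ₂` is holomorphic
with `ψ 0 = 0`. Pulling back `f dz` along `φ₂ = φ₁ ∘ ψ` in two steps gives `d(ψ^k) = d(z^k)`,
hence `ψ^k = z^k` near `0`. Then `ψ z / z` is continuous and takes values in the finite set of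
`k`-th roots of unity, so it is a constant `ζ`.
-/

open Topology

theorem Filter.Tendsto.eventually_eq_of_eventually_mem_finite {X Y : Type*} [TopologicalSpace Y]
    [T1Space Y] {l : Filter X} {w : X → Y} {y : Y} {T : Set Y} (hT : T.Finite)
    (hw : Tendsto w l (𝓝 y)) (hwT : ∀ᶠ x in l, w x ∈ T) : ∀ᶠ x in l, w x = y := by
  have hy : (T \ {y})ᶜ ∈ 𝓝 y :=
    (hT.sdiff).isClosed.isOpen_compl.mem_nhds fun h => h.2 rfl
  filter_upwards [hwT, hw hy] with x hxT hx
  by_contra hne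
  exact hx ⟨hxT, hne⟩

theorem eventuallyEq_nhds_of_hasDerivAt {𝕜 G : Type*} [RCLike 𝕜] [NormedAddCommGroup G]
    [NormedSpace 𝕜 G] {f g f' : 𝕜 → G} {a : 𝕜} (hf : ∀ᶠ z in 𝓝 a, HasDerivAt f (f' z) z)
    (hg : ∀ᶠ z in 𝓝 a, HasDerivAt g (f' z) z) (ha : f a = g a) : f =ᶠ[𝓝 a] g := by
  obtain ⟨r, hr, h⟩ := Metric.eventually_nhds_iff_ball.1 (hf.and hg)
  exact eventually_of_mem (ball_mem_nhds a hr) <|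
    isOpen_ball.eqOn_of_deriv_eq (convex_ball a r).isPreconnected
      (fun z hz => (h z hz).1.differentiableAt.differentiableWithinAt)
      (fun z hz => (h z hz).2.differentiableAt.differentiableWithinAt)
      (fun z hz => (h z hz).1.deriv.trans (h z hz).2.deriv.symm) (mem_ball_self hr) ha

section NormedField

variable {𝕜 : Type*} [NontriviallyNormedField 𝕜]

theorem mul_dslope_zero {φ : 𝕜 → 𝕜} (h0 : φ 0 = 0) (z : 𝕜) : z * dslope φ 0 z = φ z := by
  simpa [h0] using sub_smul_dslope φ 0 z

theorem deriv_pow_succ_mul_eq_of_comp_mul_deriv_eq {f g φ : 𝕜 → 𝕜} {m : ℕ} {c : 𝕜}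
    (hg : ContinuousAt g 0) (hfg : ∀ᶠ z in 𝓝 0, f z = z ^ m * g z)
    (hφ : DifferentiableAt 𝕜 φ 0) (hφ' : ContinuousAt (deriv φ) 0) (hφ0 : φ 0 = 0)
    (h : ∀ᶠ z in 𝓝 0, f (φ z) * deriv φ z = c * z ^ m) :
    deriv φ 0 ^ (m + 1) * g 0 = c := by
  let A : 𝕜 → 𝕜 := fun z => dslope φ 0 z ^ m * g (φ z) * deriv φ z
  have hA : ContinuousAt A 0 :=
    (((continuousAt_dslope_same.2 hφ).pow m).mul
      (hg.comp_of_eq hφ.continuousAt hφ0)).mul hφ'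
  have hφt : Tendsto φ (𝓝 0) (𝓝 0) := by simpa [hφ0] using hφ.continuousAt.tendsto
  have hAc : A =ᶠ[𝓝[≠] 0] fun _ => c := by
    filter_upwards [nhdsWithin_le_nhds (hφt.eventually hfg), nhdsWithin_le_nhds h,
      self_mem_nhdsWithin] with z hfz hz (hz0 : z ≠ 0)
    have hφz : φ z ^ m = z ^ m * dslope φ 0 z ^ m := by rw [← mul_pow, mul_dslope_zero hφ0]
    refine mul_left_cancel₀ (pow_ne_zero m hz0) ?_
    calc z ^ m * A z = φ z ^ m * g (φ z) * deriv φ z := by rw [hφz]; ring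
      _ = c * z ^ m := by rw [← hfz, hz]
      _ = z ^ m * c := mul_comm _ _
  have hA0 : A 0 = c :=
    ((hA.eventuallyEq_nhds_iff_eventuallyEq_nhdsNE continuousAt_const).1 hAc).eq_of_nhds
  rw [← hA0]
  simp only [A, dslope_same, hφ0]
  ring

theorem AnalyticAt.exists_analyticAt_comp_eq [CompleteSpace 𝕜] [CharZero 𝕜] {φ₁ φ₂ : 𝕜 → 𝕜}
    {a b : 𝕜} (h₁ : AnalyticAt 𝕜 φ₁ a) (h₁' : deriv φ₁ a ≠ 0) (h₂ : AnalyticAt 𝕜 φ₂ b)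
    (hab : φ₂ b = φ₁ a) :
    ∃ ψ : 𝕜 → 𝕜, AnalyticAt 𝕜 ψ b ∧ ψ b = a ∧ ∀ᶠ z in 𝓝 b, φ₁ (ψ z) = φ₂ z := by
  let r := h₁.hasStrictDerivAt.localInverse _ _ _ h₁'
  refine ⟨r ∘ φ₂, (h₁.analyticAt_localInverse h₁').comp_of_eq h₂ hab, ?_, ?_⟩
  · simp only [Function.comp_apply, hab, r]
    exact HasStrictFDerivAt.localInverse_apply_image ..
  · have h₂t : Tendsto φ₂ (𝓝 b) (𝓝 (φ₁ a)) := by simpa [hab] using h₂.continuousAt.tendsto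
    exact h₂t.eventually (h₁.hasStrictDerivAt.eventually_right_inverse h₁')

theorem hasDerivAt_pow_of_comp_eq {f φ₁ φ₂ ψ : 𝕜 → 𝕜} {k : ℕ} {z : 𝕜}
    (hψ : DifferentiableAt 𝕜 ψ z) (hφ₁ : DifferentiableAt 𝕜 φ₁ (ψ z))
    (hcomp : φ₁ ∘ ψ =ᶠ[𝓝 z] φ₂)
    (h₁ : f (φ₁ (ψ z)) * deriv φ₁ (ψ z) = k * ψ z ^ (k - 1))
    (h₂ : f (φ₂ z) * deriv φ₂ z = k * z ^ (k - 1)) :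
    HasDerivAt (fun z => ψ z ^ k) (k * z ^ (k - 1)) z := by
  have hderiv : deriv φ₂ z = deriv φ₁ (ψ z) * deriv ψ z := by
    rw [← hcomp.deriv_eq, deriv_comp z hφ₁ hψ]
  refine (hψ.hasDerivAt.pow k).congr_deriv ?_
  rw [← h₂, ← hcomp.eq_of_nhds, Function.comp_apply, hderiv, ← mul_assoc, h₁]

theorem exists_pow_eq_one_eventually_eq_mul_of_pow_eq_pow {ψ : 𝕜 → 𝕜} {k : ℕ} (hk : k ≠ 0)
    (hψ : DifferentiableAt 𝕜 ψ 0) (hψ0 : ψ 0 = 0)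
    (hpow : ∀ᶠ z in 𝓝 0, ψ z ^ k = z ^ k) :
    ∃ ζ : 𝕜, ζ ^ k = 1 ∧ ∀ᶠ z in 𝓝 0, ψ z = ζ * z := by
  have hroots (u : 𝕜) : u ∈ (Polynomial.nthRootsFinset k (1 : 𝕜) : Set 𝕜) ↔ u ^ k = 1 :=
    Polynomial.mem_nthRootsFinset (Nat.pos_of_ne_zero hk) 1
  let w := dslope ψ 0
  have hwT : ∀ᶠ z in 𝓝[≠] 0, w z ∈ (Polynomial.nthRootsFinset k (1 : 𝕜) : Set 𝕜) := by
    filter_upwards [nhdsWithin_le_nhds hpow, self_mem_nhdsWithin] with z hz (hz0 : z ≠ 0)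
    rw [hroots]
    refine mul_left_cancel₀ (pow_ne_zero k hz0) ?_
    rw [← mul_pow, mul_dslope_zero hψ0, hz, mul_one]
  have hw : ∀ᶠ z in 𝓝[≠] 0, w z = w 0 :=
    ((continuousAt_dslope_same.2 hψ).tendsto.mono_left nhdsWithin_le_nhds
      ).eventually_eq_of_eventually_mem_finite (Finset.finite_toSet _) hwT
  refine ⟨w 0, ?_, ?_⟩
  · obtain ⟨z, hzT, hz⟩ := (hwT.and hw).exists
    rwa [hz, hroots] at hzT
  · filter_upwards [eventually_nhdsWithin_iff.1 hw] with z hz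
    rcases eq_or_ne z 0 with rfl | hz0
    · simp [hψ0]
    · rw [← mul_dslope_zero hψ0 z, mul_comm]
      exact congrArg (· * z) (hz hz0)

end NormedField

theorem eventually_pow_eq_pow_of_comp_eq {𝕜 : Type*} [RCLike 𝕜] {f φ₁ φ₂ ψ : 𝕜 → 𝕜} {k : ℕ}
    (hψ : ∀ᶠ z in 𝓝 0, DifferentiableAt 𝕜 ψ z) (hψ0 : ψ 0 = 0) (hψc : ContinuousAt ψ 0)
    (hφ₁ : ∀ᶠ w in 𝓝 0, DifferentiableAt 𝕜 φ₁ w ∧ f (φ₁ w) * deriv φ₁ w = k * w ^ (k - 1))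
    (hφ₂ : ∀ᶠ z in 𝓝 0, f (φ₂ z) * deriv φ₂ z = k * z ^ (k - 1))
    (hcomp : ∀ᶠ z in 𝓝 0, φ₁ (ψ z) = φ₂ z) :
    ∀ᶠ z in 𝓝 0, ψ z ^ k = z ^ k := by
  have hψt : Tendsto ψ (𝓝 0) (𝓝 0) := by simpa [hψ0] using hψc.tendsto
  refine eventuallyEq_nhds_of_hasDerivAt (f' := fun z : 𝕜 => (k : 𝕜) * z ^ (k - 1)) ?_
    (.of_forall fun z => hasDerivAt_pow k z) (by simp [hψ0])
  filter_upwards [hψ, hψt.eventually hφ₁, hcomp.eventually_nhds, hφ₂] with z hψz hφ₁z hcompz hφ₂z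
  exact hasDerivAt_pow_of_comp_eq hψz hφ₁z.1 hcompz hφ₁z.2 hφ₂z

theorem standard_coordinate_at_zero_unique_general (k : ℕ) (hk : 1 ≤ k)
    (ρ ρ' : ℝ) (hρ' : 0 < ρ')
    (f : ℂ → ℂ)
    (h0 : HasZeroOfExactOrderAtZero f (k - 1))
    (φ₁ φ₂ : ℂ → ℂ)
    (hφ₁ : IsStandardCoordAtZero k ρ ρ' f φ₁)
    (hφ₂ : IsStandardCoordAtZero k ρ ρ' f φ₂) :
    ∃ ρ'' > (0 : ℝ), ∃ ζ : ℂ, ζ ^ k = 1 ∧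
      ∀ z ∈ ball (0 : ℂ) ρ'', φ₂ z = φ₁ (ζ * z) := by
  obtain ⟨hφ₁, -, -, hφ₁0, hφ₁eq⟩ := hφ₁
  obtain ⟨hφ₂, -, -, hφ₂0, hφ₂eq⟩ := hφ₂
  obtain ⟨g, hg, -, hfg⟩ := h0
  have hk0 : k ≠ 0 := by omega
  have hball : ball (0 : ℂ) ρ' ∈ 𝓝 0 := ball_mem_nhds 0 hρ'
  have hA₁ : AnalyticAt ℂ φ₁ 0 := hφ₁ 0 (mem_of_mem_nhds hball)
  have hφ₁' : deriv φ₁ 0 ≠ 0 := by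
    have hk_eq := deriv_pow_succ_mul_eq_of_comp_mul_deriv_eq hg.continuousAt hfg
      hA₁.differentiableAt hA₁.deriv.continuousAt hφ₁0 (eventually_of_mem hball hφ₁eq)
    rintro hzero
    rw [hzero, zero_pow (Nat.succ_ne_zero _), zero_mul] at hk_eq
    exact hk0 (by exact_mod_cast hk_eq.symm)
  obtain ⟨ψ, hψ, hψ0, hcomp⟩ := hA₁.exists_analyticAt_comp_eq hφ₁'
    (hφ₂ 0 (mem_of_mem_nhds hball)) (hφ₂0.trans hφ₁0.symm)
  have hpow : ∀ᶠ z in 𝓝 0, ψ z ^ k = z ^ k :=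
    eventually_pow_eq_pow_of_comp_eq (hψ.eventually_analyticAt.mono fun _ h => h.differentiableAt)
      hψ0 hψ.continuousAt
      (eventually_of_mem hball fun w hw => ⟨(hφ₁ w hw).differentiableAt, hφ₁eq w hw⟩)
      (eventually_of_mem hball hφ₂eq) hcomp
  obtain ⟨ζ, hζ, hψζ⟩ :=
    exists_pow_eq_one_eventually_eq_mul_of_pow_eq_pow hk0 hψ.differentiableAt hψ0 hpow
  obtain ⟨ρ'', hρ'', h⟩ := Metric.eventually_nhds_iff_ball.1 (hcomp.and hψζ)
  exact ⟨ρ'', hρ'', ζ, hζ, fun z hz => by rw [← (h z hz).1, (h z hz).2]⟩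

/-- The standard coordinate at a zero is unique up to multiplication by a `k`-th root of
unity: any two standard coordinates `φ₁, φ₂` satisfy `φ₂ z = φ₁ (ζ z)` near `0` for some
`ζ` with `ζ ^ k = 1`. -/
theorem standard_coordinate_at_zero_unique (k : ℕ) (hk : 1 ≤ k)
    (ρ ρ' : ℝ) (hρ : 0 < ρ) (hρ' : 0 < ρ')
    (f : ℂ → ℂ) (hf : AnalyticOnNhd ℂ f (ball (0 : ℂ) ρ))
    (h0 : HasZeroOfExactOrderAtZero f (k - 1))
    (φ₁ φ₂ : ℂ → ℂ)
    (hφ₁ : IsStandardCoordAtZero k ρ ρ' f φ₁)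
    (hφ₂ : IsStandardCoordAtZero k ρ ρ' f φ₂) :
    ∃ ρ'' > (0 : ℝ), ∃ ζ : ℂ, ζ ^ k = 1 ∧
      ∀ z ∈ ball (0 : ℂ) ρ'', φ₂ z = φ₁ (ζ * z) :=
  standard_coordinate_at_zero_unique_general k hk ρ ρ' hρ' f h0 φ₁ φ₂ hφ₁ hφ₂
end

section
/- Let ρ > 0 and let f be holomorphic on the punctured disk Δ_ρ∖{0} and meromorphic at 0 with a pole of order exactly 1, with residue r at 0 (necessarily r ≠ 0). Then there exist ρ′ > 0 and an injective holomorphic map φ : Δ_{ρ′} → Δ_ρ with φ(0) = 0 such that f(φ(z))·φ′(z) = r/z for all z ∈ Δ_{ρ′}∖{0}. (That is, f dz is brought to the standard form r·dz/z.) -/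
open Metric Set Filter
open scoped NNReal ENNReal Topology

lemma exists_primitive_of_analyticAt {h : ℂ → ℂ} (hh : AnalyticAt ℂ h 0) :
    ∃ ε > (0 : ℝ), ∃ H : ℂ → ℂ, H 0 = 0 ∧ ∀ z ∈ ball (0 : ℂ) ε, HasDerivAt H (h z) z := by
  obtain ⟨p, rb, hpb⟩ := hh
  obtain ⟨ε₀, hε₀pos, hε₀⟩ : ∃ ε₀ : ℝ≥0, 0 < (ε₀ : ℝ≥0∞) ∧ (ε₀ : ℝ≥0∞) < rb :=
    ENNReal.lt_iff_exists_nnreal_btwn.mp hpb.r_pos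
  have hε₀pos' : (0 : ℝ) < ε₀ := by exact_mod_cast hε₀pos
  obtain ⟨C, hC, hbound⟩ : ∃ C > 0, ∀ n, ‖p n‖ * (ε₀ : ℝ) ^ n ≤ C :=
    p.norm_mul_pow_le_of_lt_radius (hε₀.trans_le hpb.r_le)
  set ε : ℝ := ε₀ / 2 with hε
  have hεpos : 0 < ε := by positivity
  set H : ℂ → ℂ := fun z => ∑' n : ℕ, p.coeff n / (n + 1) * z ^ (n + 1) with hH
  refine ⟨ε, hεpos, H, ?_, ?_⟩
  · simp [hH]
  · intro z hz
    have key : ∀ y ∈ ball (0 : ℂ) ε, HasDerivAt H (∑' n : ℕ, p.coeff n * y ^ n) y := by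
      intro y hy
      refine hasDerivAt_tsum_of_isPreconnected (u := fun n => C * (1 / 2) ^ n)
        ?_ isOpen_ball (convex_ball _ _).isPreconnected
        (g' := fun n w => p.coeff n * w ^ n) ?_ ?_ (mem_ball_self hεpos) ?_ hy
      · exact (summable_geometric_of_lt_one (by norm_num) (by norm_num)).mul_left C
      · intro n w _
        have : HasDerivAt (fun w : ℂ => w ^ (n + 1)) ((n + 1) * w ^ n) w := by
          simpa using hasDerivAt_pow (n + 1) w
        have := this.const_mul (p.coeff n / (n + 1))
        convert this using 1
        have hne : ((n : ℂ) + 1) ≠ 0 := Nat.cast_add_one_ne_zero n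
        · rfl
        rw [← mul_assoc, div_mul_cancel₀ _ (Nat.cast_add_one_ne_zero n)]
      · intro n w hw
        have hwn : ‖w‖ ≤ ε := (mem_ball_zero_iff.mp hw).le
        calc ‖p.coeff n * w ^ n‖ = ‖p.coeff n‖ * ‖w‖ ^ n := by
              simp [norm_pow]
          _ ≤ ‖p.coeff n‖ * ε ^ n := by
              gcongr
          _ = ‖p n‖ * (ε₀ : ℝ) ^ n * (1 / 2) ^ n := by
              rw [p.norm_apply_eq_norm_coef]
              rw [hε]
              ring
          _ ≤ C * (1 / 2) ^ n := by
              gcongr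
              exact hbound n
      · exact summable_zero.congr fun n => by simp
    have hsum : HasSum (fun n : ℕ => p.coeff n * z ^ n) (h z) := by
      have hz' : z ∈ Metric.eball (0 : ℂ) rb := by
        have : ‖z‖ < ε := mem_ball_zero_iff.mp hz
        have h2 : (‖z‖₊ : ℝ≥0∞) < (ε₀ : ℝ≥0∞) := by
          refine ENNReal.coe_lt_coe.mpr ?_
          have : ‖z‖ < ε₀ := this.trans_le (by simp [hε])
          exact_mod_cast this
        simpa [Metric.mem_eball, edist_eq_enorm_sub] using (show ‖z‖ₑ < rb from h2.trans hε₀)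
      have := hpb.hasSum hz'
      simp only [zero_add] at this
      convert this using 2 with n
      · rfl
      rw [p.apply_eq_pow_smul_coeff]
      simp [smul_eq_mul]
      ring
    have kz := key z hz
    rwa [hsum.tsum_eq] at kz


/-- `f` has a pole of order exactly `1` at `0` with residue `r`: on a punctured
neighborhood of `0` one has `f z = g z / z` with `g` holomorphic near `0`, `g 0 ≠ 0`,
and the residue of `f` at `0` (the coefficient of `z⁻¹`) is `g 0 = r`. -/
def HasSimplePoleWithResidueAtZero (f : ℂ → ℂ) (r : ℂ) : Prop :=
  ∃ g : ℂ → ℂ, AnalyticAt ℂ g 0 ∧ g 0 ≠ 0 ∧ g 0 = r ∧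
    ∀ᶠ z in nhdsWithin (0 : ℂ) {(0 : ℂ)}ᶜ, f z = g z / z

/-- Existence of a standard coordinate at a simple pole: if `f` is holomorphic on
`Δ_ρ ∖ {0}` with a pole of order exactly `1` at `0` and residue `r`, there are `ρ' > 0`
and an injective holomorphic `φ : Δ_ρ' → Δ_ρ` with `φ 0 = 0` bringing `f dz` to the
standard form `r dz / z`. -/
theorem standard_coordinate_at_simple_pole (ρ : ℝ) (hρ : 0 < ρ) (r : ℂ)
    (f : ℂ → ℂ) (hf : AnalyticOnNhd ℂ f (ball (0 : ℂ) ρ \ {0}))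
    (hpole : HasSimplePoleWithResidueAtZero f r) :
    ∃ ρ' > (0 : ℝ), ∃ φ : ℂ → ℂ,
      AnalyticOnNhd ℂ φ (ball (0 : ℂ) ρ') ∧
      InjOn φ (ball (0 : ℂ) ρ') ∧
      MapsTo φ (ball (0 : ℂ) ρ') (ball (0 : ℂ) ρ) ∧
      φ 0 = 0 ∧
      ∀ z ∈ ball (0 : ℂ) ρ' \ {0}, f (φ z) * deriv φ z = r / z := by
  obtain ⟨g, hg, hg0ne, hg0r, hfg⟩ := hpole
  have hr : r ≠ 0 := hg0r ▸ hg0ne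
  obtain ⟨p, hp⟩ := hg
  have hd : AnalyticAt ℂ (dslope g 0) 0 := ⟨p.fslope, hp.has_fpower_series_dslope_fslope⟩
  obtain ⟨ε₁, hε₁, H, hH0, hHderiv⟩ := exists_primitive_of_analyticAt hd
  -- a ball on which everything is nice
  have hga : AnalyticAt ℂ g 0 := ⟨p, hp⟩
  have hev : ∀ᶠ w in 𝓝 (0 : ℂ), (w ≠ 0 → f w = g w / w) ∧ g w ≠ 0 := by
    filter_upwards [eventually_nhdsWithin_iff.mp hfg,
      hga.continuousAt.eventually_ne hg0ne] with w h1 h2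
    exact ⟨fun hw => h1 hw, h2⟩
  obtain ⟨δ, hδpos, hδ⟩ := Metric.eventually_nhds_iff_ball.mp hev
  set ε₂ : ℝ := min (min ε₁ ρ) δ with hε₂def
  have hε₂pos : 0 < ε₂ := lt_min (lt_min hε₁ hρ) hδpos
  have hε₂ρ : ε₂ ≤ ρ := le_trans (min_le_left _ _) (min_le_right _ _)
  have hε₂ε₁ : ε₂ ≤ ε₁ := le_trans (min_le_left _ _) (min_le_left _ _)
  have hε₂δ : ε₂ ≤ δ := min_le_right _ _
  -- key identity for g
  have hgkey : ∀ w : ℂ, g w = r + w * dslope g 0 w := by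
    intro w
    have := sub_smul_dslope g 0 w
    simp only [sub_zero, smul_eq_mul] at this
    rw [← hg0r]
    linear_combination -this
  set F : ℂ → ℂ := fun w => w * Complex.exp (H w / r) with hFdef
  have hFderiv : ∀ w ∈ ball (0 : ℂ) ε₂,
      HasDerivAt F (Complex.exp (H w / r) * (g w / r)) w := by
    intro w hw
    have hw1 : w ∈ ball (0 : ℂ) ε₁ := ball_subset_ball hε₂ε₁ hw
    have h1 : HasDerivAt (fun z => Complex.exp (H z / r))
        (Complex.exp (H w / r) * (dslope g 0 w / r)) w :=
      (((hHderiv w hw1).div_const r)).cexp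
    have h2 := (hasDerivAt_id w).mul h1
    convert h2 using 1
    · rfl
    · rfl
    · rfl
    rw [hgkey w]
    field_simp
    rw [id, mul_comm]
  have hF0 : F 0 = 0 := by simp [hFdef]
  have hFanal : AnalyticOnNhd ℂ F (ball (0 : ℂ) ε₂) :=
    (DifferentiableOn.analyticOnNhd
      (fun w hw => ((hFderiv w hw).differentiableAt).differentiableWithinAt) isOpen_ball)
  have hF1 : HasDerivAt F 1 0 := by
    have := hFderiv 0 (mem_ball_self hε₂pos)
    simpa [hH0, hg0r, div_self hr] using this
  have hstrict : HasStrictDerivAt F 1 0 :=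
    ((hFanal 0 (mem_ball_self hε₂pos)).contDiffAt).hasStrictDerivAt'
      (n := 1) hF1 one_ne_zero
  have e := hstrict.hasStrictFDerivAt_equiv one_ne_zero
  set Ψ := e.toOpenPartialHomeomorph F with hΨdef
  have h0src : (0 : ℂ) ∈ Ψ.source := e.mem_toOpenPartialHomeomorph_source
  have hΨcoe : ⇑Ψ = F := e.toOpenPartialHomeomorph_coe
  have hΨ0 : Ψ 0 = 0 := by rw [hΨcoe]; exact hF0
  set φ : ℂ → ℂ := ⇑Ψ.symm with hφdef
  have hφ0 : φ 0 = 0 := by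
    have := Ψ.left_inv h0src
    rwa [hΨ0] at this
  -- power series of F at 0 with correct linear coefficient
  obtain ⟨q, hq⟩ := hFanal 0 (mem_ball_self hε₂pos)
  have hq1 : q 1 = (continuousMultilinearCurryFin1 ℂ ℂ ℂ).symm
      ((ContinuousLinearEquiv.unitsEquivAut ℂ (Units.mk0 (1:ℂ) one_ne_zero)) : ℂ →L[ℂ] ℂ) := by
    have hc1 : q.coeff 1 = 1 := hq.deriv.symm.trans hF1.deriv
    ext m
    simp [FormalMultilinearSeries.apply_eq_prod_smul_coeff, hc1,
      ContinuousLinearEquiv.unitsEquivAut]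
  have hsymm := Ψ.hasFPowerSeriesAt_symm h0src hq hq1
  rw [hΨ0] at hsymm
  have hφa : AnalyticAt ℂ φ 0 := ⟨_, hsymm⟩
  have h0tgt : (0 : ℂ) ∈ Ψ.target := by
    have := Ψ.map_source h0src
    rwa [hΨ0] at this
  -- choose ρ'
  have hev2 : ∀ᶠ y in 𝓝 (0 : ℂ), AnalyticAt ℂ φ y ∧ y ∈ Ψ.target ∧ φ y ∈ ball (0 : ℂ) ε₂ := by
    have e1 : ∀ᶠ y in 𝓝 (0 : ℂ), AnalyticAt ℂ φ y := hφa.eventually_analyticAt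
    have e2 : ∀ᶠ y in 𝓝 (0 : ℂ), y ∈ Ψ.target := Ψ.open_target.mem_nhds h0tgt
    have e3 : ∀ᶠ y in 𝓝 (0 : ℂ), φ y ∈ ball (0 : ℂ) ε₂ := by
      have hc : ContinuousAt φ 0 := hφa.continuousAt
      have : ball (0 : ℂ) ε₂ ∈ 𝓝 (φ 0) := by
        rw [hφ0]; exact ball_mem_nhds _ hε₂pos
      exact hc.eventually_mem this
    filter_upwards [e1, e2, e3] with y h1 h2 h3 using ⟨h1, h2, h3⟩
  obtain ⟨ρ', hρ'pos, hball⟩ := Metric.eventually_nhds_iff_ball.mp hev2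
  have hFφ : ∀ y ∈ ball (0 : ℂ) ρ', F (φ y) = y := by
    intro y hy
    have := Ψ.right_inv (hball y hy).2.1
    rwa [hΨcoe] at this
  refine ⟨ρ', hρ'pos, φ, ?_, ?_, ?_, hφ0, ?_⟩
  · exact fun y hy => (hball y hy).1
  · intro a ha b hb hab
    rw [← hFφ a ha, ← hFφ b hb, hab]
  · intro y hy
    exact ball_subset_ball hε₂ρ (hball y hy).2.2
  · rintro z ⟨hz, hzne⟩
    have hzne' : z ≠ 0 := hzne
    set w := φ z with hwdef
    have hw2 : w ∈ ball (0 : ℂ) ε₂ := (hball z hz).2.2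
    have hFw : F w = z := hFφ z hz
    have hwne : w ≠ 0 := by
      intro hw0
      apply hzne'
      rw [← hFw, hw0, hF0]
    have hwδ : w ∈ ball (0 : ℂ) δ := ball_subset_ball hε₂δ hw2
    obtain ⟨hfw, hgwne⟩ := hδ w hwδ
    have hfweq : f w = g w / w := hfw hwne
    have hφd : HasDerivAt φ (deriv φ z) z :=
      ((hball z hz).1.differentiableAt).hasDerivAt
    have hFd := hFderiv w hw2
    have hcomp : HasDerivAt (F ∘ φ)
        (Complex.exp (H w / r) * (g w / r) * deriv φ z) z := hFd.comp z hφd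
    have hid : HasDerivAt (F ∘ φ) 1 z := by
      have : (F ∘ φ) =ᶠ[𝓝 z] id := by
        filter_upwards [isOpen_ball.mem_nhds hz] with y hy
        exact hFφ y hy
      exact (hasDerivAt_id z).congr_of_eventuallyEq this
    have hD : Complex.exp (H w / r) * (g w / r) * deriv φ z = 1 :=
      hcomp.unique hid
    have hexp : Complex.exp (H w / r) ≠ 0 := Complex.exp_ne_zero _
    set dφ := deriv φ z with hdφ
    have hD' : Complex.exp (H w / r) * g w * dφ = r := by
      field_simp at hD
      linear_combination hD
    rw [hfweq, ← hFw]
    show g w / w * dφ = r / (w * Complex.exp (H w / r))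
    field_simp
    linear_combination hD'
end

section
/- Let k_1, …, k_r be positive integers, L = lcm(k_1, …, k_r), and for a positive integer k let μ_k ⊂ ℂ denote the group of k-th roots of unity. Define Ψ : ℂ^* × ∏_{i=1}^r μ_{k_i} → (ℂ^*)^r by Ψ(ε, (ζ_i)_i) = (ζ_i·ε^{L/k_i})_i. Then Ψ(ε, (ζ_i)) = Ψ(ε′, (ζ′_i)) if and only if there exists η ∈ μ_L such that ε′ = η·ε and ζ′_i = η^{−L/k_i}·ζ_i for all 1 ≤ i ≤ r. In other words, the fibers of Ψ are exactly the orbits of the μ_L-action given by η·(ε, (ζ_i)_i) = (η·ε, (η^{−L/k_i}·ζ_i)_i). -/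
/-- Fibers of the plumbing-parameter map `Ψ (ε, (ζ_i)_i) = (ζ_i · ε^(L/k_i))_i`, defined
on `ℂ* × ∏ i μ_{k_i}` where `L = lcm(k_1, …, k_r)`: two parameters have the same image
iff they differ by the action of an `L`-th root of unity `η`, acting by
`η · (ε, (ζ_i)_i) = (η ε, (η^{-L/k_i} ζ_i)_i)`. -/
theorem plumbing_parameters_fibers (r : ℕ) (hr : 1 ≤ r) (k : Fin r → ℕ)
    (hk : ∀ i, 0 < k i) (L : ℕ) (hL : L = Finset.univ.lcm k)
    (ε ε' : ℂ) (hε : ε ≠ 0) (hε' : ε' ≠ 0)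
    (ζ ζ' : Fin r → ℂ) (hζ : ∀ i, ζ i ^ k i = 1) (hζ' : ∀ i, ζ' i ^ k i = 1) :
    (∀ i, ζ i * ε ^ (L / k i) = ζ' i * ε' ^ (L / k i)) ↔
      ∃ η : ℂ, η ^ L = 1 ∧ ε' = η * ε ∧
        ∀ i, ζ' i = (η ^ (L / k i))⁻¹ * ζ i := by
  have hd : ∀ i, k i ∣ L := fun i => hL ▸ Finset.dvd_lcm (Finset.mem_univ i)
  have hLpos : L ≠ 0 := by
    rw [hL]
    intro h
    obtain ⟨i, _, hi⟩ := (Finset.lcm_eq_zero_iff).mp h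
    exact (hk i).ne' hi
  have hζne : ∀ i, ζ i ≠ 0 := fun i h => by
    have := hζ i; rw [h, zero_pow (hk i).ne'] at this; exact zero_ne_one this
  have hζ'ne : ∀ i, ζ' i ≠ 0 := fun i h => by
    have := hζ' i; rw [h, zero_pow (hk i).ne'] at this; exact zero_ne_one this
  constructor
  · intro h
    set η := ε' / ε with hηdef
    have hηne : η ≠ 0 := div_ne_zero hε' hε
    have key : ∀ i, η ^ (L / k i) * ζ' i = ζ i := by
      intro i
      have := h i
      rw [hηdef, div_pow, div_mul_eq_mul_div, div_eq_iff (pow_ne_zero _ hε)]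
      linear_combination -this
    set i0 : Fin r := ⟨0, hr⟩
    have hηL : η ^ L = 1 := by
      have h1 : η ^ (L / k i0) = ζ i0 / ζ' i0 := by
        rw [eq_div_iff (hζ'ne i0)]; exact key i0
      calc η ^ L = (η ^ (L / k i0)) ^ k i0 := by
            rw [← pow_mul, Nat.div_mul_cancel (hd i0)]
        _ = (ζ i0 / ζ' i0) ^ k i0 := by rw [h1]
        _ = 1 := by rw [div_pow, hζ i0, hζ' i0, div_one]
    refine ⟨η, hηL, by rw [hηdef, div_mul_cancel₀ ε' hε], fun i => ?_⟩
    rw [eq_inv_mul_iff_mul_eq₀ (pow_ne_zero _ hηne)]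
    exact key i
  · rintro ⟨η, hη, rfl, hz⟩ i
    have hηne : η ≠ 0 := by
      intro h; rw [h, zero_pow hLpos] at hη; exact zero_ne_one hη
    rw [hz i, mul_pow]
    field_simp
end
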